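/- arXiv:2502.17274 — 5 statements merged into one kernel-verified Lean document; each statement's English description precedes it below -/
import Mathlib

section
/- For every integer q ≥ 1 and all w, λ ∈ ℂ, the following identity holds: w^q/q! + Σ_{j=1}^{q} ( w^{q−j}/(q−j)! · Σ_{k=0}^{j−1} ((j−k)·w)^k / k! · (−λ)^{j−k} ) = Σ_{j=0}^{q} ((j+1)·w)^{q−j}/(q−j)! · (−λ)^{j}. -/
/-! Regroup the double sum by `p = j - k`: for fixed `p ≥ 1` the terms with `k = 0, …, q - p` form
the binomial expansion of `(p w + w)^(q-p)/(q-p)!`, times `(-λ)^p`, and the isolated term `w^q/q!`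
is the `p = 0` summand of the right-hand side. -/

open Finset

open scoped Nat

theorem add_pow_div_factorial {K : Type*} [Field K] [CharZero K] (x y : K) (n : ℕ) :
    (x + y) ^ n / n ! = ∑ k ∈ range (n + 1), x ^ k / k ! * (y ^ (n - k) / (n - k)!) := by
  rw [add_pow, sum_div]
  refine sum_congr rfl fun k hk => ?_
  rw [Nat.cast_choose K (Nat.le_of_lt_succ (mem_range.1 hk))]
  field_simp [Nat.factorial_ne_zero]

theorem sum_Icc_sum_range_eq_sum_Icc_sum_range_add {M : Type*} [AddCommMonoid M] (q : ℕ)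
    (f : ℕ → ℕ → M) :
    ∑ j ∈ Icc 1 q, ∑ k ∈ range j, f j k = ∑ p ∈ Icc 1 q, ∑ k ∈ range (q - p + 1), f (p + k) k := by
  rw [sum_sigma', sum_sigma']
  refine sum_nbij' (fun x => ⟨x.1 - x.2, x.2⟩) (fun x => ⟨x.1 + x.2, x.2⟩) ?_ ?_ ?_ ?_ ?_ <;>
    rintro ⟨j, k⟩ h <;> simp only [mem_sigma, mem_Icc, mem_range, Sigma.mk.injEq, heq_eq_eq] at h ⊢ <;>
    grind

theorem sum_identity_general (q : ℕ) (w l : ℂ) :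
    w ^ q / (Nat.factorial q : ℂ)
      + ∑ j ∈ Icc 1 q, (w ^ (q - j) / ((Nat.factorial (q - j) : ℂ))
          * ∑ k ∈ range j, (((j - k : ℕ) : ℂ) * w) ^ k / ((Nat.factorial k : ℂ)) * (-l) ^ (j - k))
    = ∑ j ∈ range (q + 1),
        (((j + 1 : ℕ) : ℂ) * w) ^ (q - j) / ((Nat.factorial (q - j) : ℂ)) * (-l) ^ j := by
  have fixed_difference (p : ℕ) (_ : p ∈ Icc 1 q) :
      ∑ k ∈ range (q - p + 1), w ^ (q - (p + k)) / (q - (p + k))! *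
          ((((p + k - k : ℕ) : ℂ) * w) ^ k / k ! * (-l) ^ (p + k - k))
        = (((p + 1 : ℕ) : ℂ) * w) ^ (q - p) / (q - p)! * (-l) ^ p := by
    rw [Nat.cast_add_one, add_one_mul, add_pow_div_factorial, sum_mul]
    refine sum_congr rfl fun k _ => ?_
    rw [Nat.add_sub_cancel, Nat.sub_add_eq]
    ring
  simp_rw [mul_sum]
  rw [sum_Icc_sum_range_eq_sum_Icc_sum_range_add, sum_congr rfl fixed_difference, range_eq_Ico,
    sum_eq_sum_Ico_succ_bot (by omega : 0 < q + 1), Ico_add_one_right_eq_Icc]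
  simp

/-- For every integer `q ≥ 1` and all `w, λ ∈ ℂ`:
`w^q/q! + Σ_{j=1}^{q} ( w^{q−j}/(q−j)! · Σ_{k=0}^{j−1} ((j−k)w)^k/k! · (−λ)^{j−k} )`
`= Σ_{j=0}^{q} ((j+1)w)^{q−j}/(q−j)! · (−λ)^{j}`. -/
theorem sum_identity (q : ℕ) (hq : 1 ≤ q) (w l : ℂ) :
    w ^ q / (Nat.factorial q : ℂ)
      + ∑ j ∈ Icc 1 q, (w ^ (q - j) / ((Nat.factorial (q - j) : ℂ))
          * ∑ k ∈ range j, (((j - k : ℕ) : ℂ) * w) ^ k / ((Nat.factorial k : ℂ)) * (-l) ^ (j - k))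
    = ∑ j ∈ range (q + 1),
        (((j + 1 : ℕ) : ℂ) * w) ^ (q - j) / ((Nat.factorial (q - j) : ℂ)) * (-l) ^ j :=
  sum_identity_general q w l
end

section
/- Let q ≥ 1 be an integer, α > 0 a real number, and let ω_k := exp(2πik/q) for k = 1,…,q. Define the q×q matrices F with F_{j,k} := ω_k^{1−j}/q and S(α) with S(α)_{j,k} := (α+ω_j)^k / k. Then the entries of the product F·S(α) are given by: (F·S(α))_{j,k} = (1/k)·C(k, j−1)·α^{k−j+1} if j ≤ k+1 and (j,k) ≠ (1,q); (F·S(α))_{1,q} = (1/q)·α^{q} + 1/q; and (F·S(α))_{j,k} = 0 if j > k+1. Here C(k, j−1) denotes the binomial coefficient. -/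
/-- The `q`-th roots of unity: `ω k = exp(2πik/q)`. -/
noncomputable def omegaU (q k : ℕ) : ℂ :=
  Complex.exp (2 * Real.pi * Complex.I * k / q)

/-- The q×q matrix `S(α)` with entries `S(α)_{j,k} = (α + ω_j)^k / k`
(rows/columns indexed by 1,…,q). -/
noncomputable def matS (q : ℕ) (α : ℝ) : Matrix (Fin q) (Fin q) ℂ :=
  fun j k => ((α : ℂ) + omegaU q (j.1 + 1)) ^ (k.1 + 1) / ((k.1 + 1 : ℕ) : ℂ)

/-- The q×q matrix `F` with entries `F_{j,k} = ω_k^{1-j} / q`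
(rows/columns indexed by 1,…,q). -/
noncomputable def matF (q : ℕ) : Matrix (Fin q) (Fin q) ℂ :=
  fun j k => omegaU q (k.1 + 1) ^ ((1 : ℤ) - ((j.1 : ℤ) + 1)) / q

lemma FS_dvd_char {q c : ℕ} (hq : 1 ≤ q) (h1 : 1 ≤ c) (h2 : c ≤ 2*q) :
    q ∣ c ↔ c = q ∨ c = 2*q := by
  constructor
  · rintro ⟨t, rfl⟩
    have ht1 : 1 ≤ t := by
      rcases Nat.eq_zero_or_pos t with rfl | h
      · simp at h1
      · exact h
    have ht2 : t ≤ 2 := Nat.le_of_mul_le_mul_left (show q * t ≤ q * 2 by omega) (by omega)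
    interval_cases t <;> omega
  · rintro (rfl | rfl)
    · exact dvd_rfl
    · exact dvd_mul_left q 2

lemma FS_sum_root (q : ℕ) (hq : 1 ≤ q) (c : ℕ) :
    ∑ l ∈ Finset.range q, Complex.exp (2 * Real.pi * Complex.I / q) ^ ((l+1)*c)
      = if q ∣ c then (q:ℂ) else 0 := by
  have hprim : IsPrimitiveRoot (Complex.exp (2 * Real.pi * Complex.I / q)) q :=
    Complex.isPrimitiveRoot_exp q (by omega)
  set ζ := Complex.exp (2 * Real.pi * Complex.I / (q:ℂ)) with hζ
  by_cases hd : q ∣ c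
  · obtain ⟨t, rfl⟩ := hd
    have h1 : ∀ l : ℕ, ζ ^ ((l+1)*(q*t)) = 1 := by
      intro l
      have h : (l+1)*(q*t) = q * ((l+1)*t) := by ring
      rw [h, pow_mul, hprim.pow_eq_one, one_pow]
    rw [Finset.sum_congr rfl (fun l _ => h1 l), if_pos ⟨t, rfl⟩]
    simp
  · rw [if_neg hd]
    have h1 : ζ ^ c ≠ 1 := fun h => hd ((hprim.pow_eq_one_iff_dvd c).mp h)
    have h2 : ∀ l : ℕ, ζ ^ ((l+1)*c) = (ζ^c)^l * ζ^c := by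
      intro l; rw [add_mul, one_mul, pow_add, mul_comm l c, pow_mul]
    rw [Finset.sum_congr rfl (fun l _ => h2 l), ← Finset.sum_mul, geom_sum_eq h1]
    have h3 : (ζ^c)^q = 1 := by rw [← pow_mul, mul_comm, pow_mul, hprim.pow_eq_one, one_pow]
    rw [h3, sub_self, zero_div, zero_mul]

lemma FS_entry_eq (q : ℕ) (hq : 1 ≤ q) (α : ℝ) (j k : Fin q) :
    (matF q * matS q α) j k
      = (∑ m ∈ Finset.range (k.1+2),
          if q ∣ (q - j.1) + (k.1+1-m) then (α:ℂ)^m * ((k.1+1).choose m : ℂ) else 0)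
        / ((k.1+1 : ℕ) : ℂ) := by
  set ζ := Complex.exp (2 * Real.pi * Complex.I / (q:ℂ)) with hζ
  have hqC : (q:ℂ) ≠ 0 := Nat.cast_ne_zero.mpr (by omega)
  have hKC : ((k.1+1 : ℕ) : ℂ) ≠ 0 := Nat.cast_ne_zero.mpr (by omega)
  have hω : ∀ n : ℕ, omegaU q n = ζ ^ n := by
    intro n
    rw [omegaU, hζ, ← Complex.exp_nat_mul]
    congr 1
    ring
  have hζq : ζ ^ q = 1 := (Complex.isPrimitiveRoot_exp q (by omega)).pow_eq_one
  have hζ0 : ζ ≠ 0 := Complex.exp_ne_zero _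
  have hzp : ∀ i : ℕ, (ζ ^ (i+1)) ^ ((1:ℤ) - ((j.1 : ℤ) + 1)) = ζ ^ ((i+1)*(q - j.1)) := by
    intro i
    have h0 : (ζ ^ (i+1)) ≠ 0 := pow_ne_zero _ hζ0
    have h1 : (ζ ^ (i+1)) ^ q = 1 := by
      rw [← pow_mul, mul_comm, pow_mul, hζq, one_pow]
    have hz : (1:ℤ) - ((j.1:ℤ)+1) = ((q - j.1 : ℕ) : ℤ) - (q : ℤ) := by
      push_cast [Nat.cast_sub (le_of_lt j.2)]; ring
    rw [hz, zpow_sub₀ h0, zpow_natCast, zpow_natCast, h1, div_one, ← pow_mul]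
  have hterm : ∀ i : ℕ, omegaU q (i+1) ^ ((1:ℤ) - ((j.1:ℤ)+1)) / q
      * (((α:ℂ) + omegaU q (i+1)) ^ (k.1+1) / ((k.1+1 : ℕ) : ℂ))
      = ∑ m ∈ Finset.range (k.1+2),
          (α:ℂ)^m * ((k.1+1).choose m : ℂ) * ζ^((i+1)*((q - j.1)+(k.1+1-m)))
            / ((q:ℂ) * ((k.1+1 : ℕ) : ℂ)) := by
    intro i
    rw [hω (i+1), hzp i, add_pow, Finset.sum_div, Finset.mul_sum]
    refine Finset.sum_congr rfl fun m _ => ?_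
    rw [← pow_mul, mul_add, pow_add]
    push_cast
    field_simp
  rw [Matrix.mul_apply]
  simp only [matF, matS]
  rw [Fin.sum_univ_eq_sum_range (fun i => omegaU q (i+1) ^ ((1:ℤ) - ((j.1:ℤ)+1)) / q
      * (((α:ℂ) + omegaU q (i+1)) ^ (k.1+1) / ((k.1+1 : ℕ) : ℂ))) q]
  rw [Finset.sum_congr rfl (fun i _ => hterm i), Finset.sum_comm, Finset.sum_div]
  refine Finset.sum_congr rfl fun m hm => ?_
  rw [← Finset.sum_div, ← Finset.mul_sum, hζ, FS_sum_root q hq]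
  split_ifs with h
  · rw [show ((α:ℂ)^m * ((k.1+1).choose m : ℂ) * q) = (q:ℂ) * ((α:ℂ)^m * ((k.1+1).choose m : ℂ)) from by ring,
      mul_div_mul_left _ _ hqC]
  · simp

/-- The entries of `F·S(α)`: writing `J := j.1 + 1`, `K := k.1 + 1` for the 1-based
row/column indices, `(F·S(α))_{J,K} = (1/K)·C(K,J−1)·α^{K−J+1}` if `J ≤ K+1` and
`(J,K) ≠ (1,q)`; `(F·S(α))_{1,q} = (1/q)·α^q + 1/q`; and `(F·S(α))_{J,K} = 0`
if `J > K+1`. -/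
theorem FS_entries (q : ℕ) (hq : 1 ≤ q) (α : ℝ) (hα : 0 < α) (j k : Fin q) :
    ((j.1 ≤ k.1 + 1 ∧ ¬(j.1 = 0 ∧ k.1 = q - 1)) →
      (matF q * matS q α) j k
        = (1 / ((k.1 + 1 : ℕ) : ℂ)) * ((Nat.choose (k.1 + 1) j.1 : ℕ) : ℂ)
            * (α : ℂ) ^ (k.1 + 1 - j.1)) ∧
    ((j.1 = 0 ∧ k.1 = q - 1) →
      (matF q * matS q α) j k = (1 / (q : ℂ)) * (α : ℂ) ^ q + 1 / (q : ℂ)) ∧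
    (k.1 + 1 < j.1 → (matF q * matS q α) j k = 0) := by
  have hj := j.2
  have hk := k.2
  have hqC : (q:ℂ) ≠ 0 := Nat.cast_ne_zero.mpr (by omega)
  have hKC : ((k.1+1 : ℕ) : ℂ) ≠ 0 := Nat.cast_ne_zero.mpr (by omega)
  rw [FS_entry_eq q hq α j k]
  refine ⟨?_, ?_, ?_⟩
  · rintro ⟨hjk, hne⟩
    have hs : (∑ m ∈ Finset.range (k.1+2),
          if q ∣ (q - j.1) + (k.1+1-m) then (α:ℂ)^m * ((k.1+1).choose m : ℂ) else 0)
        = (α:ℂ)^(k.1+1-j.1) * ((k.1+1).choose j.1 : ℂ) := by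
      have h0 := Finset.sum_eq_single_of_mem
        (s := Finset.range (k.1+2))
        (f := fun m => if q ∣ (q - j.1) + (k.1+1-m) then (α:ℂ)^m * ((k.1+1).choose m : ℂ) else 0)
        (k.1+1-j.1) (Finset.mem_range.mpr (by omega))
        (fun b hb hbne => if_neg (by
          intro hd
          have hb' := Finset.mem_range.mp hb
          rw [FS_dvd_char hq (by omega) (by omega)] at hd
          omega))
      rw [h0]
      beta_reduce
      rw [if_pos (show q ∣ (q - j.1) + (k.1+1-(k.1+1-j.1)) from ⟨1, by omega⟩),
        Nat.choose_symm hjk]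
    rw [hs]
    ring
  · rintro ⟨hj0, hkq⟩
    have hK2 : k.1 + 2 = q + 1 := by omega
    have hK : k.1 + 1 = q := by omega
    rw [hK2, hK, hj0]
    simp only [Nat.sub_zero]
    have hcong : ∀ m ∈ Finset.range (q+1),
        (if q ∣ q + (q - m) then (α:ℂ)^m * ((q).choose m : ℂ) else 0)
        = (if m = 0 then (1:ℂ) else 0) + (if m = q then (α:ℂ)^q else 0) := by
      intro m hm
      have hm' := Finset.mem_range.mp hm
      rcases eq_or_ne m 0 with rfl | hm0
      · rw [if_pos ⟨2, by omega⟩, if_pos rfl, if_neg (by omega)]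
        simp
      · rcases eq_or_ne m q with rfl | hmq
        · rw [if_pos ⟨1, by omega⟩, if_neg hm0, if_pos rfl]
          simp
        · rw [if_neg, if_neg hm0, if_neg hmq, add_zero]
          intro hd
          rw [FS_dvd_char hq (by omega) (by omega)] at hd
          omega
    rw [Finset.sum_congr rfl hcong, Finset.sum_add_distrib,
      Finset.sum_ite_eq' (Finset.range (q+1)) 0 (fun _ => (1:ℂ)),
      Finset.sum_ite_eq' (Finset.range (q+1)) q (fun _ => (α:ℂ)^q),
      if_pos (Finset.mem_range.mpr (by omega)), if_pos (Finset.mem_range.mpr (by omega))]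
    field_simp
    ring
  · intro hjk
    rw [Finset.sum_eq_zero, zero_div]
    intro b hb
    rw [if_neg]
    intro hd
    have hb' := Finset.mem_range.mp hb
    rw [FS_dvd_char hq (by omega) (by omega)] at hd
    omega
end

section
/- Let α > 0 be real and z, λ ∈ ℂ. For q ≥ 1 let D_q denote the determinant of the q×q upper-Hessenberg matrix M^{(q)} with entries M_{j,k} := z·(1/k)·C(k, j−1)·α^{k−j+1} − λ·[j = k] for j ≤ k, M_{j+1,j} := z/j on the subdiagonal, and 0 below the subdiagonal, and set D_0 := 1. Then for every q ≥ 1 the difference equation λ·D_{q−1} + Σ_{j=0}^{q} ((−αz)^j / j!)·D_{q−j} = 0 holds. -/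
/-!
Expand `D_{n+1}` along its last column (indices from 0). Deleting row `i` and the last column of a
Hessenberg matrix leaves a block upper triangular matrix: its leading block is `M^{(i)}`, and its
trailing block is upper triangular with the subdiagonal entries `z/(k+1)`, `i ≤ k < n`, on the
diagonal. Hence `D_{n+1} = Σ_i (-1)^{i+n} M_{i,n} D_i z^{n-i} i!/n!`, and since
`C(n+1,i) i!/(n+1)! = 1/(n+1-i)!` each coefficient is `-(-αz)^{n+1-i}/(n+1-i)!`, while the `λ` on the
diagonal entry `M_{n,n}` contributes `-λ D_n`.
-/

open Finset

/-- The q×q upper-Hessenberg matrix `M^{(q)}` (1-based indices `J = j+1`, `K = k+1`):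
`M_{J,K} = z·(1/K)·C(K,J−1)·α^{K−J+1} − λ·[J=K]` for `J ≤ K`, `M_{K+1,K} = z/K` on the
subdiagonal, and `0` below the subdiagonal. -/
noncomputable def hessM (α : ℝ) (z l : ℂ) (q : ℕ) : Matrix (Fin q) (Fin q) ℂ :=
  fun j k =>
    if j.1 ≤ k.1 then
      z * (1 / ((k.1 + 1 : ℕ) : ℂ)) * ((Nat.choose (k.1 + 1) j.1 : ℕ) : ℂ)
          * (α : ℂ) ^ (k.1 + 1 - j.1)
        - (if j = k then l else 0)
    else if j.1 = k.1 + 1 then z / ((k.1 + 1 : ℕ) : ℂ)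
    else 0

/-- `D_q := det M^{(q)}`, with `D_0 = 1` (determinant of the empty matrix). -/
noncomputable def Dseq (α : ℝ) (z l : ℂ) (q : ℕ) : ℂ :=
  (hessM α z l q).det

open scoped Nat

section
variable {R : Type*}

def leadingMatrix (a : ℕ → ℕ → R) (n : ℕ) : Matrix (Fin n) (Fin n) R :=
  Matrix.of fun i j => a i j

def deleteRow (a : ℕ → ℕ → R) (i : ℕ) : ℕ → ℕ → R :=
  fun r c => a (if r < i then r else r + 1) c

theorem submatrix_leadingMatrix_succAbove_castSucc (a : ℕ → ℕ → R) {n : ℕ} (i : Fin (n + 1)) :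
    (leadingMatrix a (n + 1)).submatrix i.succAbove Fin.castSucc
      = leadingMatrix (deleteRow a i) n := by
  ext r c
  simp [leadingMatrix, deleteRow, Fin.succAbove, Fin.lt_def, apply_ite Fin.val]

theorem leadingMatrix_deleteRow (a : ℕ → ℕ → R) (i : ℕ) :
    leadingMatrix (deleteRow a i) i = leadingMatrix a i := by
  ext r c
  simp [leadingMatrix, deleteRow]

variable [CommRing R]

theorem det_leadingMatrix_succ_of_lastRow (a : ℕ → ℕ → R) (n : ℕ) (h : ∀ c < n, a n c = 0) :
    (leadingMatrix a (n + 1)).det = (leadingMatrix a n).det * a n n := by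
  have hlast (c : Fin n) : leadingMatrix a (n + 1) (Fin.last n) c.castSucc = 0 := h c c.isLt
  rw [Matrix.det_succ_row _ (Fin.last n), Fin.sum_univ_castSucc, Fin.succAbove_last]
  simp only [hlast, mul_zero, zero_mul, sum_const_zero, zero_add, Fin.val_last,
    Even.neg_one_pow ⟨n, rfl⟩, one_mul]
  exact mul_comm _ _

theorem det_leadingMatrix_eq_mul_prod_diag (a : ℕ → ℕ → R) {m n : ℕ} (hmn : m ≤ n)
    (h : ∀ r c, m ≤ r → c < r → a r c = 0) :
    (leadingMatrix a n).det = (leadingMatrix a m).det * ∏ k ∈ Ico m n, a k k := by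
  induction n, hmn using Nat.le_induction with
  | base => simp
  | succ n hmn ih =>
    rw [det_leadingMatrix_succ_of_lastRow a n fun c hc => h n c hmn hc, ih,
      prod_Ico_succ_top hmn, mul_assoc]

theorem det_leadingMatrix_of_hessenberg (a : ℕ → ℕ → R) (ha : ∀ r c, c + 1 < r → a r c = 0)
    (n : ℕ) :
    (leadingMatrix a (n + 1)).det = ∑ i ∈ range (n + 1),
      (-1) ^ (i + n) * a i n * (leadingMatrix a i).det * ∏ k ∈ Ico i n, a (k + 1) k := by
  rw [Matrix.det_succ_column _ (Fin.last n)]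
  simp only [Fin.succAbove_last, submatrix_leadingMatrix_succAbove_castSucc]
  rw [← Fin.sum_univ_eq_sum_range fun i : ℕ =>
    (-1) ^ (i + n) * a i n * (leadingMatrix a i).det * ∏ k ∈ Ico i n, a (k + 1) k]
  refine sum_congr rfl fun i _ => ?_
  have hi : i.1 ≤ n := Nat.lt_succ_iff.mp i.isLt
  rw [det_leadingMatrix_eq_mul_prod_diag _ hi, leadingMatrix_deleteRow, mul_assoc]
  · have hdiag : ∏ k ∈ Ico (i : ℕ) n, deleteRow a i k k = ∏ k ∈ Ico (i : ℕ) n, a (k + 1) k :=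
      prod_congr rfl fun k hk => by simp [deleteRow, not_lt.mpr (mem_Ico.mp hk).1]
    simp only [hdiag, Fin.val_last, leadingMatrix, Matrix.of_apply]
    ring
  · intro r c hr hc
    simp only [deleteRow, if_neg (not_lt.mpr hr)]
    exact ha _ _ (by omega)
end

theorem prod_Ico_div_succ {K : Type*} [Field K] [CharZero K] (z : K) {i n : ℕ} (hin : i ≤ n) :
    ∏ k ∈ Ico i n, z / ((k + 1 : ℕ) : K) = z ^ (n - i) * i ! / n ! := by
  induction n, hin using Nat.le_induction with
  | base => simp [(Nat.cast_ne_zero.mpr i.factorial_ne_zero)]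
  | succ n hin ih =>
    rw [prod_Ico_succ_top hin, ih, Nat.sub_add_comm hin, Nat.factorial_succ]
    push_cast
    field_simp
    ring

theorem choose_term_eq_neg_pow_div_factorial {K : Type*} [Field K] [CharZero K] (a z : K)
    {i n : ℕ} (hin : i ≤ n) :
    (-1) ^ (i + n) * (z * (1 / ((n + 1 : ℕ) : K)) * ((n + 1).choose i : ℕ) * a ^ (n + 1 - i))
        * (z ^ (n - i) * i ! / n !)
      = -((-(a * z)) ^ (n + 1 - i) / (n + 1 - i)!) := by
  obtain ⟨k, rfl⟩ := Nat.exists_eq_add_of_le hin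
  rw [Nat.cast_choose K (by omega : i ≤ i + k + 1), show i + k + 1 - i = k + 1 by omega,
    show i + k - i = k by omega, show i + (i + k) = 2 * i + k by ring, pow_add, pow_mul,
    Nat.factorial_succ (i + k), neg_pow, pow_succ (-1 : K), Nat.factorial_succ k]
  have : (i + k + 1 : K) ≠ 0 := by exact_mod_cast (i + k).succ_ne_zero
  have : ((i + k)! : K) ≠ 0 := by exact_mod_cast (i + k).factorial_ne_zero
  have : (i ! : K) ≠ 0 := by exact_mod_cast i.factorial_ne_zero
  push_cast
  field_simp
  ring

section
variable (α : ℝ) (z l : ℂ)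

/-- The entries of `hessM` with 0-based indices; `hessM α z l q` is its leading `q × q` block. -/
noncomputable def hessEntry (j k : ℕ) : ℂ :=
  if j ≤ k then
    z * (1 / ((k + 1 : ℕ) : ℂ)) * ((Nat.choose (k + 1) j : ℕ) : ℂ) * (α : ℂ) ^ (k + 1 - j)
      - (if j = k then l else 0)
  else if j = k + 1 then z / ((k + 1 : ℕ) : ℂ)
  else 0

theorem Dseq_eq_det_leadingMatrix (q : ℕ) :
    Dseq α z l q = (leadingMatrix (hessEntry α z l) q).det := by
  rw [Dseq]
  congr 1
  ext j k
  simp only [hessM, hessEntry, leadingMatrix, Matrix.of_apply, Fin.ext_iff]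

theorem hessEntry_eq_zero_of_succ_lt {r c : ℕ} (h : c + 1 < r) : hessEntry α z l r c = 0 := by
  rw [hessEntry, if_neg (by omega), if_neg (by omega)]

theorem hessEntry_succ_self (k : ℕ) : hessEntry α z l (k + 1) k = z / ((k + 1 : ℕ) : ℂ) := by
  simp [hessEntry]

theorem hessEntry_lastColumn_term (D : ℂ) {i n : ℕ} (hin : i ≤ n) :
    (-1) ^ (i + n) * hessEntry α z l i n * D * ∏ k ∈ Ico i n, hessEntry α z l (k + 1) k
      = -((-(α * z)) ^ (n + 1 - i) / (n + 1 - i)! * D) - if i = n then l * D else 0 := by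
  have hcoeff := choose_term_eq_neg_pow_div_factorial (α : ℂ) z hin
  rw [prod_congr rfl fun k _ => hessEntry_succ_self α z l k, prod_Ico_div_succ z hin, hessEntry,
    if_pos hin]
  split_ifs with h
  · subst h
    have hunit : (-1 : ℂ) ^ (i + i) * (z ^ (i - i) * i ! / i !) = 1 := by
      rw [Even.neg_one_pow ⟨i, rfl⟩, Nat.sub_self, pow_zero, one_mul, one_mul,
        div_self (Nat.cast_ne_zero.mpr i.factorial_ne_zero)]
    linear_combination D * hcoeff - l * D * hunit
  · linear_combination D * hcoeff

theorem Dseq_succ (n : ℕ) :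
    Dseq α z l (n + 1) = -(l * Dseq α z l n)
      - ∑ i ∈ range (n + 1), (-(α * z)) ^ (n + 1 - i) / (n + 1 - i)! * Dseq α z l i := by
  rw [Dseq_eq_det_leadingMatrix,
    det_leadingMatrix_of_hessenberg _ fun r c => hessEntry_eq_zero_of_succ_lt α z l]
  simp only [← Dseq_eq_det_leadingMatrix]
  rw [sum_congr rfl fun i hi =>
      hessEntry_lastColumn_term α z l _ (Nat.lt_succ_iff.mp (mem_range.mp hi)),
    sum_sub_distrib, sum_ite_eq', if_pos (self_mem_range_succ n), sum_neg_distrib]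
  ring

end

theorem Dseq_recursion_general (α : ℝ) (z l : ℂ) (q : ℕ) (hq : 1 ≤ q) :
    l * Dseq α z l (q - 1)
      + ∑ j ∈ range (q + 1),
          ((-((α : ℂ) * z)) ^ j / (Nat.factorial j : ℂ)) * Dseq α z l (q - j) = 0 := by
  obtain ⟨n, rfl⟩ := Nat.exists_eq_add_of_le' hq
  have reflect : ∑ k ∈ range (n + 1), (-(α * z : ℂ)) ^ (k + 1) / (k + 1)! * Dseq α z l (n - k)
      = ∑ i ∈ range (n + 1), (-(α * z)) ^ (n + 1 - i) / (n + 1 - i)! * Dseq α z l i := by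
    rw [← sum_range_reflect]
    refine sum_congr rfl fun k hk => ?_
    have hk := mem_range.mp hk
    rw [show n + 1 - 1 - k + 1 = n + 1 - k by omega, show n - (n + 1 - 1 - k) = k by omega]
  rw [Nat.add_sub_cancel, sum_range_succ']
  simp only [Nat.add_sub_add_right, Nat.sub_zero, pow_zero, Nat.factorial_zero, Nat.cast_one,
    div_one, one_mul]
  rw [reflect, Dseq_succ]
  ring

/-- The difference equation `λ·D_{q−1} + Σ_{j=0}^{q} ((−αz)^j/j!)·D_{q−j} = 0`
for every `q ≥ 1`. -/
theorem Dseq_recursion (α : ℝ) (hα : 0 < α) (z l : ℂ) (q : ℕ) (hq : 1 ≤ q) :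
    l * Dseq α z l (q - 1)
      + ∑ j ∈ range (q + 1),
          ((-((α : ℂ) * z)) ^ j / (Nat.factorial j : ℂ)) * Dseq α z l (q - j) = 0 :=
  Dseq_recursion_general α z l q hq
end

section
/- Let q ≥ 1 be an integer, α > 0 real, δ ∈ {0, 1}, θ ∈ ℝ, and z ∈ ℂ. Set ζ := −e^{−iθ}·z. Then f_q(e^{iθ}; z) + f_{q−1}(e^{iθ}; z) − ((−z/α)^q/q!)·δ = (−e^{iθ})^q · ( f̃_q(ζ) − e^{−iθ}·f̃_{q−1}(ζ) − ((−ζ/α)^q/q!)·δ ), where f_m(λ; w) := Σ_{j=0}^{m} ((j+1)w)^{m−j}/(m−j)! · (−λ)^{j} and f̃_m(ζ) := Σ_{j=0}^{m} ((j+1)ζ)^{m−j}/(m−j)!. In particular, the zeros z(θ) of the root-locus polynomial p_q(z; θ) := f_q(e^{iθ}; z) + f_{q−1}(e^{iθ}; z) − ((−z/α)^q/q!)·δ correspond bijectively, via ζ = −e^{−iθ}z, to the zeros of the variant polynomial p̃_q(ζ; θ) := f̃_q(ζ) − e^{−iθ}f̃_{q−1}(ζ) − ((−ζ/α)^q/q!)·δ,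 and corresponding zeros have equal modulus. -/
open Finset

/-- `f_m(λ; w) := Σ_{j=0}^{m} ((j+1)w)^{m−j}/(m−j)! · (−λ)^{j}`. -/
noncomputable def fPoly (m : ℕ) (l w : ℂ) : ℂ :=
  ∑ j ∈ range (m + 1),
    (((j + 1 : ℕ) : ℂ) * w) ^ (m - j) / ((Nat.factorial (m - j) : ℂ)) * (-l) ^ j

/-- `f̃_m(ζ) := Σ_{j=0}^{m} ((j+1)ζ)^{m−j}/(m−j)!`. -/
noncomputable def ftPoly (m : ℕ) (ζ : ℂ) : ℂ :=
  ∑ j ∈ range (m + 1),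
    (((j + 1 : ℕ) : ℂ) * ζ) ^ (m - j) / ((Nat.factorial (m - j) : ℂ))

/-! Substituting `w = -λζ` makes every term of `f_m(λ; w)` carry the same power
`(-λ)^(m-j) (-λ)^j = (-λ)^m`, so `f_m(λ; -λζ) = (-λ)^m f̃_m(ζ)`. With `λ = e^{iθ}` this
turns the root-locus polynomial into `(-λ)^q` times the variant one, the factor
`(-λ)^(q-1) = -(-λ)^q λ⁻¹` of the `f_{q-1}` term producing the coefficient `-e^{-iθ}`. -/

theorem fPoly_neg_mul (m : ℕ) (l ζ : ℂ) :
    fPoly m l (-l * ζ) = (-l) ^ m * ftPoly m ζ := by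
  rw [fPoly, ftPoly, mul_sum]
  refine sum_congr rfl fun j hj => ?_
  rw [show ((j + 1 : ℕ) : ℂ) * (-l * ζ) = -l * (((j + 1 : ℕ) : ℂ) * ζ) by ring, mul_pow,
    ← pow_sub_mul_pow (-l) (Nat.lt_succ_iff.mp (mem_range.mp hj))]
  ring

theorem fPoly_add_fPoly_sub_one_neg_mul {q : ℕ} (hq : 1 ≤ q) {l e : ℂ} (hle : l * e = 1)
    (ζ : ℂ) :
    fPoly q l (-l * ζ) + fPoly (q - 1) l (-l * ζ)
      = (-l) ^ q * (ftPoly q ζ - e * ftPoly (q - 1) ζ) := by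
  obtain ⟨n, rfl⟩ : ∃ n, q = n + 1 := ⟨q - 1, by omega⟩
  rw [Nat.add_sub_cancel, fPoly_neg_mul, fPoly_neg_mul]
  linear_combination (-(-l) ^ n * ftPoly n ζ) * hle

theorem norm_exp_neg_ofReal_mul_I_mul (θ : ℝ) (z : ℂ) :
    ‖Complex.exp (-(θ : ℂ) * Complex.I) * z‖ = ‖z‖ := by
  rw [norm_mul, ← Complex.ofReal_neg, Complex.norm_exp_ofReal_mul_I, one_mul]

theorem root_locus_transformation_general (q : ℕ) (hq : 1 ≤ q) (α : ℝ)
    (δ : ℂ) (θ : ℝ) (z ζ : ℂ)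
    (hζ : ζ = -Complex.exp (-(θ : ℂ) * Complex.I) * z) :
    (fPoly q (Complex.exp ((θ : ℂ) * Complex.I)) z
        + fPoly (q - 1) (Complex.exp ((θ : ℂ) * Complex.I)) z
        - (-z / (α : ℂ)) ^ q / (Nat.factorial q : ℂ) * δ
      = (-Complex.exp ((θ : ℂ) * Complex.I)) ^ q
        * (ftPoly q ζ - Complex.exp (-(θ : ℂ) * Complex.I) * ftPoly (q - 1) ζ
            - (-ζ / (α : ℂ)) ^ q / (Nat.factorial q : ℂ) * δ)) ∧
    ((fPoly q (Complex.exp ((θ : ℂ) * Complex.I)) z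
        + fPoly (q - 1) (Complex.exp ((θ : ℂ) * Complex.I)) z
        - (-z / (α : ℂ)) ^ q / (Nat.factorial q : ℂ) * δ = 0)
      ↔ (ftPoly q ζ - Complex.exp (-(θ : ℂ) * Complex.I) * ftPoly (q - 1) ζ
            - (-ζ / (α : ℂ)) ^ q / (Nat.factorial q : ℂ) * δ = 0)) ∧
    ‖ζ‖ = ‖z‖ := by
  set l := Complex.exp ((θ : ℂ) * Complex.I)
  set e := Complex.exp (-(θ : ℂ) * Complex.I)
  have hle : l * e = 1 := by rw [← Complex.exp_add, neg_mul, add_neg_cancel, Complex.exp_zero]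
  have hz : z = -l * ζ := by linear_combination (-z) * hle + l * hζ
  have hidentity : fPoly q l z + fPoly (q - 1) l z - (-z / (α : ℂ)) ^ q / (Nat.factorial q : ℂ) * δ
      = (-l) ^ q * (ftPoly q ζ - e * ftPoly (q - 1) ζ
          - (-ζ / (α : ℂ)) ^ q / (Nat.factorial q : ℂ) * δ) := by
    rw [hz, fPoly_add_fPoly_sub_one_neg_mul hq hle,
      show -(-l * ζ) / (α : ℂ) = -l * (-ζ / α) by ring, mul_pow]
    ring
  have hpow : (-l) ^ q ≠ 0 := pow_ne_zero _ (neg_ne_zero.mpr (Complex.exp_ne_zero _))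
  refine ⟨hidentity, by rw [hidentity, mul_eq_zero, or_iff_right hpow], ?_⟩
  rw [hζ, neg_mul, norm_neg, norm_exp_neg_ofReal_mul_I_mul]

/-- With `ζ := −e^{−iθ}z`, the root-locus polynomial
`p_q(z; θ) = f_q(e^{iθ}; z) + f_{q−1}(e^{iθ}; z) − ((−z/α)^q/q!)·δ` satisfies
`p_q(z; θ) = (−e^{iθ})^q · p̃_q(ζ; θ)` where
`p̃_q(ζ; θ) = f̃_q(ζ) − e^{−iθ}f̃_{q−1}(ζ) − ((−ζ/α)^q/q!)·δ`; in particular the zeros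
correspond (`p_q(z;θ) = 0 ↔ p̃_q(ζ;θ) = 0`) and `|ζ| = |z|`. -/
theorem root_locus_transformation (q : ℕ) (hq : 1 ≤ q) (α : ℝ) (hα : 0 < α)
    (δ : ℂ) (hδ : δ = 0 ∨ δ = 1) (θ : ℝ) (z ζ : ℂ)
    (hζ : ζ = -Complex.exp (-(θ : ℂ) * Complex.I) * z) :
    (fPoly q (Complex.exp ((θ : ℂ) * Complex.I)) z
        + fPoly (q - 1) (Complex.exp ((θ : ℂ) * Complex.I)) z
        - (-z / (α : ℂ)) ^ q / (Nat.factorial q : ℂ) * δ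
      = (-Complex.exp ((θ : ℂ) * Complex.I)) ^ q
        * (ftPoly q ζ - Complex.exp (-(θ : ℂ) * Complex.I) * ftPoly (q - 1) ζ
            - (-ζ / (α : ℂ)) ^ q / (Nat.factorial q : ℂ) * δ)) ∧
    ((fPoly q (Complex.exp ((θ : ℂ) * Complex.I)) z
        + fPoly (q - 1) (Complex.exp ((θ : ℂ) * Complex.I)) z
        - (-z / (α : ℂ)) ^ q / (Nat.factorial q : ℂ) * δ = 0)
      ↔ (ftPoly q ζ - Complex.exp (-(θ : ℂ) * Complex.I) * ftPoly (q - 1) ζ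
            - (-ζ / (α : ℂ)) ^ q / (Nat.factorial q : ℂ) * δ = 0)) ∧
    ‖ζ‖ = ‖z‖ :=
  root_locus_transformation_general q hq α δ θ z ζ hζ
end

section
/- For every real ζ with −1/e < ζ < 0, the sequence p̃_n(ζ) := f̃_n(ζ) + f̃_{n−1}(ζ), where f̃_m(ζ) := Σ_{j=0}^{m} ((j+1)ζ)^{m−j}/(m−j)!, tends to 0 as n → ∞. In particular, there is no uniform positive lower bound on p̃_n(ζ) over n for such ζ, which refutes Buvoli's conjecture that the absolute stability regions of the Adams–Bashforth-type integrator converge, as the order q → ∞, to a limiting region containing the left half-disk of radius 1/e. -/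
open Finset Filter

/-- Real version of `f̃_m(ζ) := Σ_{j=0}^{m} ((j+1)ζ)^{m−j}/(m−j)!`. -/
noncomputable def ftPolyR (m : ℕ) (ζ : ℝ) : ℝ :=
  ∑ j ∈ range (m + 1),
    (((j + 1 : ℕ) : ℝ) * ζ) ^ (m - j) / ((Nat.factorial (m - j) : ℝ))

/-!
Writing `j ↦ m - j`, `f̃_m(ζ) = Y_m(m)` where `Y_n(t) = Σ_{k ≤ n} ζ^k (t + 1 - k)^k / k!`;
on `[n - 1, n]` the polynomial `Y_n` is the solution of the delay equation `y'(t) = ζ y(t - 1)`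
with `y = 1` on `[-1, 0]`. For `ζ = -x` with `0 < x < 1/e` there is `r ∈ (0, 1)` with
`x e^r = r`, and then `z(t) = e^{rt} y(t)` satisfies `z'(t) = r (z(t) - z(t - 1))`, i.e.
`z'(t) = r ∫_{t-1}^t z'`. Since `r < 1`, the bound on `|z'|` shrinks by a factor `r` from one unit
interval to the next, so `z` stays bounded and `f̃_m(ζ) = e^{-rm} z(m) → 0`.
-/

open Set intervalIntegral

theorem abs_le_mul_of_eq_mul_integral {v w : ℝ → ℝ} {a r B : ℝ} (hw : Continuous w)
    (hr₀ : 0 ≤ r) (hr₁ : r < 1) (hB : 0 ≤ B) (hv : ∀ u ∈ Icc (a - 1) a, |v u| ≤ B)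
    (heq : ∀ t ∈ Icc a (a + 1), w t = r * ((∫ u in t - 1..a, v u) + ∫ u in a..t, w u)) :
    ∀ t ∈ Icc a (a + 1), |w t| ≤ r * B := by
  obtain ⟨t₀, ht₀, hmax⟩ := (isCompact_Icc (a := a) (b := a + 1)).exists_isMaxOn
    (nonempty_Icc.2 (by linarith)) hw.abs.continuousOn
  set M := |w t₀|
  have hpointwise : ∀ t ∈ Icc a (a + 1), |w t| ≤ r * (B * (a + 1 - t) + M * (t - a)) := by
    intro t ht
    rw [heq t ht, abs_mul, abs_of_nonneg hr₀]
    gcongr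
    refine (abs_add_le _ _).trans (add_le_add ?_ ?_)
    · have := norm_integral_le_of_norm_le_const (a := t - 1) (b := a) (C := B) (f := v)
        fun u hu ↦ by
          rw [uIoc_of_le (by linarith [ht.2])] at hu
          exact hv u ⟨by linarith [hu.1, ht.1], hu.2⟩
      rwa [abs_of_nonneg (by linarith [ht.2]), show a - (t - 1) = a + 1 - t by ring] at this
    · have := norm_integral_le_of_norm_le_const (a := a) (b := t) (C := M) (f := w) fun u hu ↦ by
        rw [uIoc_of_le ht.1] at hu
        exact hmax ⟨hu.1.le, hu.2.trans ht.2⟩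
      rwa [abs_of_nonneg (by linarith [ht.1])] at this
  -- `M ≤ r · (convex combination of B and M)` with `r < 1` forces `M ≤ B`.
  have hMB : M ≤ B := by
    by_contra! hBM
    have hconv : B * (a + 1 - t₀) + M * (t₀ - a) ≤ M := by
      nlinarith [ht₀.1, ht₀.2]
    have : M ≤ r * M := (hpointwise t₀ ht₀).trans (by gcongr)
    nlinarith
  intro t ht
  calc |w t| ≤ r * (B * (a + 1 - t) + M * (t - a)) := hpointwise t ht
    _ ≤ r * (B * (a + 1 - t) + B * (t - a)) := by gcongr; linarith [ht.1]
    _ = r * B := by ring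

noncomputable def delayPoly (ζ : ℝ) (n : ℕ) (t : ℝ) : ℝ :=
  ∑ k ∈ range (n + 1), ζ ^ k * (t + 1 - k) ^ k / k.factorial

theorem ftPolyR_eq_delayPoly (ζ : ℝ) (m : ℕ) : ftPolyR m ζ = delayPoly ζ m m := by
  rw [ftPolyR, ← sum_range_reflect, delayPoly]
  refine sum_congr rfl fun j hj ↦ ?_
  have hjm : j ≤ m := Nat.lt_succ_iff.mp (mem_range.mp hj)
  rw [show m + 1 - 1 - j = m - j by omega, Nat.sub_sub_self hjm,
    show ((m - j + 1 : ℕ) : ℝ) = m + 1 - j by push_cast [Nat.cast_sub hjm]; ring, mul_pow]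
  ring

theorem delayPoly_zero (ζ t : ℝ) : delayPoly ζ 0 t = 1 := by
  simp [delayPoly]

theorem delayPoly_succ_natCast (ζ : ℝ) (n : ℕ) :
    delayPoly ζ (n + 1) n = delayPoly ζ n n := by
  rw [delayPoly, sum_range_succ, ← delayPoly]
  simp

theorem continuous_delayPoly (ζ : ℝ) (n : ℕ) : Continuous (delayPoly ζ n) := by
  unfold delayPoly
  fun_prop

theorem hasDerivAt_delayPoly_succ (ζ : ℝ) (n : ℕ) (t : ℝ) :
    HasDerivAt (delayPoly ζ (n + 1)) (ζ * delayPoly ζ n (t - 1)) t := by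
  have hterm : ∀ k ∈ range (n + 2),
      HasDerivAt (fun t : ℝ ↦ ζ ^ k * (t + 1 - k) ^ k / k.factorial)
      (ζ ^ k * (k * (t + 1 - k) ^ (k - 1) * 1) / k.factorial) t := fun k _ ↦
    ((((hasDerivAt_id t).add_const 1).sub_const (k : ℝ)).pow k).const_mul (ζ ^ k) |>.div_const _
  refine (HasDerivAt.fun_sum hterm).congr_deriv ?_
  rw [sum_range_succ', delayPoly, mul_sum]
  simp only [Nat.cast_zero, pow_zero, zero_mul, mul_zero, zero_div, add_zero]
  refine sum_congr rfl fun k _ ↦ ?_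
  have hk : ((k : ℝ) + 1) ≠ 0 := by positivity
  rw [Nat.add_sub_cancel, Nat.factorial_succ]
  push_cast
  field_simp
  ring

noncomputable def expDelayPoly (ζ r : ℝ) (n : ℕ) (t : ℝ) : ℝ :=
  Real.exp (r * t) * delayPoly ζ n t

noncomputable def expDelayPolyDeriv (ζ r : ℝ) : ℕ → ℝ → ℝ
  | 0, t => r * expDelayPoly ζ r 0 t
  | n + 1, t => r * (expDelayPoly ζ r (n + 1) t - expDelayPoly ζ r n (t - 1))

section ExpDelayPoly

variable {ζ r : ℝ}

theorem expDelayPoly_succ_natCast (n : ℕ) :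
    expDelayPoly ζ r (n + 1) n = expDelayPoly ζ r n n := by
  rw [expDelayPoly, delayPoly_succ_natCast, expDelayPoly]

theorem continuous_expDelayPoly (n : ℕ) : Continuous (expDelayPoly ζ r n) :=
  (Real.continuous_exp.comp (continuous_const_mul r)).mul (continuous_delayPoly ζ n)

theorem continuous_expDelayPolyDeriv (n : ℕ) : Continuous (expDelayPolyDeriv ζ r n) := by
  cases n with
  | zero => exact continuous_const.mul (continuous_expDelayPoly 0)
  | succ n =>
    exact continuous_const.mul ((continuous_expDelayPoly (n + 1)).sub
      ((continuous_expDelayPoly n).comp (continuous_sub_right 1)))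

variable (hr : ζ * Real.exp r = -r)
include hr

theorem hasDerivAt_expDelayPoly (n : ℕ) (t : ℝ) :
    HasDerivAt (expDelayPoly ζ r n) (expDelayPolyDeriv ζ r n t) t := by
  have hexp : HasDerivAt (fun t ↦ Real.exp (r * t)) (Real.exp (r * t) * r) t := by
    simpa using ((hasDerivAt_id t).const_mul r).exp
  cases n with
  | zero =>
    have hZ : expDelayPoly ζ r 0 = fun t ↦ Real.exp (r * t) := by
      ext; rw [expDelayPoly, delayPoly_zero, mul_one]
    simpa [hZ, expDelayPolyDeriv, mul_comm] using hexp
  | succ n =>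
    refine (hexp.mul (hasDerivAt_delayPoly_succ ζ n t)).congr_deriv ?_
    have hshift : ζ * Real.exp (r * t) = -r * Real.exp (r * (t - 1)) := by
      rw [← hr, show r * t = r + r * (t - 1) by ring, Real.exp_add]
      ring
    simp only [expDelayPolyDeriv, expDelayPoly]
    linear_combination delayPoly ζ n (t - 1) * hshift

theorem integral_expDelayPolyDeriv (n : ℕ) (s t : ℝ) :
    ∫ u in s..t, expDelayPolyDeriv ζ r n u = expDelayPoly ζ r n t - expDelayPoly ζ r n s :=
  integral_eq_sub_of_hasDerivAt (fun u _ ↦ hasDerivAt_expDelayPoly hr n u)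
    ((continuous_expDelayPolyDeriv n).intervalIntegrable s t)

theorem expDelayPolyDeriv_succ_eq_mul_integral (n : ℕ) (t : ℝ) :
    expDelayPolyDeriv ζ r (n + 1) t =
      r * ((∫ u in t - 1..(n : ℝ), expDelayPolyDeriv ζ r n u) +
        ∫ u in (n : ℝ)..t, expDelayPolyDeriv ζ r (n + 1) u) := by
  rw [integral_expDelayPolyDeriv hr, integral_expDelayPolyDeriv hr, expDelayPolyDeriv,
    expDelayPoly_succ_natCast]
  ring

theorem abs_expDelayPolyDeriv_le (hr₀ : 0 < r) (hr₁ : r < 1) (n : ℕ) :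
    ∀ t ∈ Icc ((n : ℝ) - 1) n, |expDelayPolyDeriv ζ r n t| ≤ r ^ (n + 1) := by
  induction n with
  | zero =>
    intro t ht
    have hexp : Real.exp (r * t) ≤ 1 :=
      Real.exp_le_one_iff.2 (mul_nonpos_of_nonneg_of_nonpos hr₀.le (by simpa using ht.2))
    simp only [expDelayPolyDeriv, expDelayPoly, delayPoly_zero, abs_mul, abs_of_pos hr₀,
      abs_of_pos (Real.exp_pos _), mul_one, zero_add, pow_one]
    nlinarith
  | succ n ih =>
    rw [pow_succ', Nat.cast_succ, add_sub_cancel_right]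
    exact abs_le_mul_of_eq_mul_integral (continuous_expDelayPolyDeriv (n + 1)) hr₀.le hr₁
      (by positivity) ih fun t _ ↦ expDelayPolyDeriv_succ_eq_mul_integral hr n t

theorem abs_expDelayPoly_natCast_le (hr₀ : 0 < r) (hr₁ : r < 1) (n : ℕ) :
    |expDelayPoly ζ r n n| ≤ 1 / (1 - r) := by
  have hsum : ∀ n : ℕ, |expDelayPoly ζ r n n| ≤ ∑ k ∈ range (n + 1), r ^ k := by
    intro n
    induction n with
    | zero => simp [expDelayPoly, delayPoly_zero]
    | succ n ih =>
      have hstep : |expDelayPoly ζ r (n + 1) (n + 1) - expDelayPoly ζ r n n| ≤ r ^ (n + 1) := by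
        rw [← expDelayPoly_succ_natCast, ← integral_expDelayPolyDeriv hr, ← Real.norm_eq_abs]
        have := norm_integral_le_of_norm_le_const (a := n) (b := n + 1)
          (f := expDelayPolyDeriv ζ r (n + 1)) (C := r ^ (n + 1)) fun u hu ↦ by
          rw [uIoc_of_le (by linarith)] at hu
          refine (abs_expDelayPolyDeriv_le hr hr₀ hr₁ (n + 1) u ?_).trans
            (pow_le_pow_of_le_one hr₀.le hr₁.le (Nat.le_succ (n + 1)))
          push_cast
          exact ⟨by linarith [hu.1], hu.2⟩
        simpa using this
      rw [sum_range_succ, Nat.cast_succ]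
      linarith [abs_sub_abs_le_abs_sub (expDelayPoly ζ r (n + 1) (n + 1)) (expDelayPoly ζ r n n)]
  have hgeom := geom_sum_Ico_le_of_lt_one (m := 0) (n := n + 1) hr₀.le hr₁
  rw [← range_eq_Ico, pow_zero] at hgeom
  exact (hsum n).trans hgeom

end ExpDelayPoly

theorem exists_mul_exp_eq_neg {ζ : ℝ} (h₁ : -1 / Real.exp 1 < ζ) (h₂ : ζ < 0) :
    ∃ r ∈ Ioo (0 : ℝ) 1, ζ * Real.exp r = -r := by
  have hcont : ContinuousOn (fun r ↦ ζ * Real.exp r + r) (Icc 0 1) := by fun_prop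
  have hζe : -1 < ζ * Real.exp 1 := by
    rwa [div_lt_iff₀ (Real.exp_pos 1)] at h₁
  obtain ⟨r, hr, hroot⟩ := intermediate_value_Ioo (zero_le_one' ℝ) hcont
    ⟨by simpa using h₂, by linarith⟩
  exact ⟨r, hr, by linarith [show ζ * Real.exp r + r = 0 from hroot]⟩

theorem tendsto_ftPolyR_atTop {ζ : ℝ} (h₁ : -1 / Real.exp 1 < ζ) (h₂ : ζ < 0) :
    Tendsto (fun m : ℕ ↦ ftPolyR m ζ) atTop (nhds 0) := by
  obtain ⟨r, ⟨hr₀, hr₁⟩, hr⟩ := exists_mul_exp_eq_neg h₁ h₂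
  have hbound : ∀ m : ℕ, ‖ftPolyR m ζ‖ ≤ 1 / (1 - r) * Real.exp (-r) ^ m := by
    intro m
    have hf : ftPolyR m ζ = Real.exp (-r) ^ m * expDelayPoly ζ r m m := by
      rw [ftPolyR_eq_delayPoly, expDelayPoly, ← mul_assoc, ← Real.exp_nat_mul, ← Real.exp_add,
        show (m : ℝ) * -r + r * m = 0 by ring, Real.exp_zero, one_mul]
    rw [hf, Real.norm_eq_abs, abs_mul, abs_of_pos (by positivity), mul_comm]
    gcongr
    exact abs_expDelayPoly_natCast_le hr hr₀ hr₁ m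
  refine squeeze_zero_norm hbound ?_
  simpa using (tendsto_pow_atTop_nhds_zero_of_lt_one (Real.exp_pos _).le
    (Real.exp_lt_one_iff.2 (neg_lt_zero.2 hr₀))).const_mul (1 / (1 - r))

/-- For every real `ζ ∈ (−1/e, 0)`, the sequence `p̃_n(ζ) = f̃_n(ζ) + f̃_{n−1}(ζ)` tends
to `0` as `n → ∞`; in particular there is no uniform positive lower bound on `p̃_n(ζ)`
over `n`.  This refutes Buvoli's limiting-stability conjecture. -/
theorem ptilde_tendsto_zero (ζ : ℝ) (h₁ : -1 / Real.exp 1 < ζ) (h₂ : ζ < 0) :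
    Tendsto (fun n : ℕ => ftPolyR (n + 1) ζ + ftPolyR n ζ) atTop (nhds 0) ∧
    ¬ ∃ c : ℝ, 0 < c ∧ ∀ n : ℕ, 1 ≤ n → c ≤ ftPolyR n ζ + ftPolyR (n - 1) ζ := by
  have hf := tendsto_ftPolyR_atTop h₁ h₂
  have hp : Tendsto (fun n : ℕ => ftPolyR (n + 1) ζ + ftPolyR n ζ) atTop (nhds 0) := by
    simpa using (hf.comp (tendsto_add_atTop_nat 1)).add hf
  refine ⟨hp, fun ⟨c, hc, hlb⟩ ↦ ?_⟩
  obtain ⟨n, hn⟩ := (hp.eventually (eventually_lt_nhds hc)).exists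
  have := hlb (n + 1) n.succ_pos
  rw [Nat.add_sub_cancel] at this
  linarith
end
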